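/- Let h, x : ℤ² → ℂ be finitely supported. Then the convolution h ∗ x can be computed exactly by one level of a downsampling–filtering–upsampling network: h ∗ x = Σ_{p∈{0,1}²} S_p ( U₂ ( Σ_{q∈{0,1}²} g_{p,q} ∗ D₂(S_{−q} x) ) ), where g_{p,q}[m] = h[2m + p − q], S_a is the shift by a, D₂ is downsampling by 2 in each coordinate, and U₂ is upsampling by zero insertion. -/
import Mathlib


open scoped BigOperators

/-- Convolution of signals on ℤ²: `(h∗x)[n] = Σ_{m∈ℤ²} h[m] x[n−m]`. -/
noncomputable def conv2 (h x : ℤ × ℤ → ℂ) : ℤ × ℤ → ℂ :=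
  fun n => ∑ᶠ m : ℤ × ℤ, h m * x (n - m)

/-- Shift operator: `(S_a x)[n] = x[n − a]`. -/
def shift (a : ℤ × ℤ) (x : ℤ × ℤ → ℂ) : ℤ × ℤ → ℂ :=
  fun n => x (n - a)

/-- Downsampling by 2 in each coordinate: `(D₂ x)[n] = x[2n]`. -/
def down2 (x : ℤ × ℤ → ℂ) : ℤ × ℤ → ℂ :=
  fun n => x (2 * n)

/-- Upsampling by zero insertion: `(U₂ x)[n] = x[n/2]` if both coordinates of `n`
are even, and `0` otherwise. -/
def up2 (x : ℤ × ℤ → ℂ) : ℤ × ℤ → ℂ :=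
  fun n => if n.1 % 2 = 0 ∧ n.2 % 2 = 0 then x (n.1 / 2, n.2 / 2) else 0

/-- The polyphase filters `g_{p,q}[m] = h[2m + p − q]`. -/
def polyFilter (h : ℤ × ℤ → ℂ) (p q : ℤ × ℤ) : ℤ × ℤ → ℂ :=
  fun m => h (2 * m + p - q)

/-- The set `{0,1}²` of phases. -/
def phases : Finset (ℤ × ℤ) := ({0, 1} : Finset ℤ) ×ˢ ({0, 1} : Finset ℤ)

lemma mem_phases (q : ℤ × ℤ) : q ∈ phases ↔ (q.1 = 0 ∨ q.1 = 1) ∧ (q.2 = 0 ∨ q.2 = 1) := by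
  simp [phases, Finset.mem_product]

/-- One level of a downsampling–filtering–upsampling network computes the
convolution exactly:
`h ∗ x = Σ_{p∈{0,1}²} S_p ( U₂ ( Σ_{q∈{0,1}²} g_{p,q} ∗ D₂(S_{−q} x) ) )`. -/
theorem conv2_eq_down_filter_up (h x : ℤ × ℤ → ℂ)
    (hh : (Function.support h).Finite) (hx : (Function.support x).Finite) :
    conv2 h x =
      ∑ p ∈ phases,
        shift p (up2 (∑ q ∈ phases, conv2 (polyFilter h p q) (down2 (shift (-q) x)))) := by
  funext n
  rw [Finset.sum_apply]
  set p : ℤ × ℤ := (n.1 % 2, n.2 % 2) with hpdef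
  have hpmem : p ∈ phases := by
    rw [mem_phases, hpdef]; constructor <;> omega
  rw [Finset.sum_eq_single p]
  · -- the main computation
    set k : ℤ × ℤ := ((n.1 - p.1) / 2, (n.2 - p.2) / 2) with hkdef
    have h2k : 2 * k = n - p := by
      have h1 : (2 * k).1 = (n - p).1 := by simp [hkdef, hpdef]; omega
      have h2 : (2 * k).2 = (n - p).2 := by simp [hkdef, hpdef]; omega
      exact Prod.ext h1 h2
    have hev : (n - p).1 % 2 = 0 ∧ (n - p).2 % 2 = 0 := by
      constructor <;> simp [hpdef] <;> omega
    have hup : shift p (up2 (∑ q ∈ phases, conv2 (polyFilter h p q) (down2 (shift (-q) x)))) n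
        = ∑ q ∈ phases, conv2 (polyFilter h p q) (down2 (shift (-q) x)) k := by
      simp only [shift, up2]
      rw [if_pos hev, Finset.sum_apply]
      rfl
    rw [hup]
    -- the summand function
    set F : ℤ × ℤ → ℂ := fun j => h j * x (n - j) with hF
    have hFfin : (Function.support F).Finite := by
      apply hh.subset
      intro j hj
      simp only [hF, Function.mem_support] at hj ⊢
      intro h0; exact hj (by rw [h0]; ring)
    -- each q-term as a finsum of F over a coset
    have hterm : ∀ q ∈ phases, conv2 (polyFilter h p q) (down2 (shift (-q) x)) k
        = ∑ᶠ m : ℤ × ℤ, F (2 * m + p - q) := by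
      intro q _
      apply finsum_congr
      intro m
      simp only [polyFilter, down2, shift, hF]
      congr 2
      linear_combination h2k
    rw [Finset.sum_congr rfl hterm]
    -- injectivity of the affine maps
    have hinj : ∀ q : ℤ × ℤ, Function.Injective (fun m : ℤ × ℤ => 2 * m + p - q) := by
      intro q m m' hmm
      simp only at hmm
      have h1 : (2 * m + p - q).1 = (2 * m' + p - q).1 := by rw [hmm]
      have h2 : (2 * m + p - q).2 = (2 * m' + p - q).2 := by rw [hmm]
      simp [Prod.mul_def, Prod.add_def, Prod.sub_def] at h1 h2
      exact Prod.ext (by omega) (by omega)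
    -- rewrite each as finsum over range ∩ support
    have hrange : ∀ q ∈ phases, (∑ᶠ m : ℤ × ℤ, F (2 * m + p - q))
        = ∑ᶠ j ∈ (Set.range (fun m : ℤ × ℤ => 2 * m + p - q) ∩ Function.support F), F j := by
      intro q _
      rw [finsum_mem_inter_support, finsum_mem_range (hinj q)]
    rw [Finset.sum_congr rfl hrange]
    set t : ℤ × ℤ → Set (ℤ × ℤ) :=
      fun q => Set.range (fun m : ℤ × ℤ => 2 * m + p - q) ∩ Function.support F with ht
    have hdisj : (↑phases : Set (ℤ × ℤ)).PairwiseDisjoint t := by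
      intro q hq q' hq' hne
      rw [Finset.mem_coe, mem_phases] at hq hq'
      show Disjoint (t q) (t q')
      rw [Set.disjoint_left]
      rintro j ⟨⟨m, hm⟩, -⟩ ⟨⟨m', hm'⟩, -⟩
      apply hne
      have := hm.trans hm'.symm
      simp only at this
      have h1 : (2 * m + p - q).1 = (2 * m' + p - q').1 := by rw [this]
      have h2 : (2 * m + p - q).2 = (2 * m' + p - q').2 := by rw [this]
      simp [Prod.mul_def, Prod.add_def, Prod.sub_def] at h1 h2
      exact Prod.ext (by omega) (by omega)
    have htfin : ∀ q ∈ (↑phases : Set (ℤ × ℤ)), (t q).Finite :=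
      fun q _ => hFfin.subset (Set.inter_subset_right)
    have hcover : (⋃ q ∈ (↑phases : Set (ℤ × ℤ)), t q) = Function.support F := by
      ext j
      simp only [Set.mem_iUnion, ht, Set.mem_inter_iff, Set.mem_range]
      constructor
      · rintro ⟨q, hq, ⟨-, hjF⟩⟩; exact hjF
      · intro hjF
        refine ⟨((p.1 - j.1) % 2, (p.2 - j.2) % 2), ?_, ⟨((j.1 + (p.1 - j.1) % 2 - p.1) / 2,
            (j.2 + (p.2 - j.2) % 2 - p.2) / 2), ?_⟩, hjF⟩
        · rw [Finset.mem_coe, mem_phases]; constructor <;> omega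
        · have e1 : (2 * ((j.1 + (p.1 - j.1) % 2 - p.1) / 2, (j.2 + (p.2 - j.2) % 2 - p.2) / 2)
              + p - ((p.1 - j.1) % 2, (p.2 - j.2) % 2) : ℤ × ℤ).1 = j.1 := by
            simp [Prod.mul_def, Prod.add_def, Prod.sub_def]; omega
          have e2 : (2 * ((j.1 + (p.1 - j.1) % 2 - p.1) / 2, (j.2 + (p.2 - j.2) % 2 - p.2) / 2)
              + p - ((p.1 - j.1) % 2, (p.2 - j.2) % 2) : ℤ × ℤ).2 = j.2 := by
            simp [Prod.mul_def, Prod.add_def, Prod.sub_def]; omega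
          exact Prod.ext e1 e2
    calc conv2 h x n = ∑ᶠ j, F j := rfl
      _ = ∑ᶠ j ∈ Function.support F, F j := by
          rw [← Set.univ_inter (Function.support F), finsum_mem_inter_support, finsum_mem_univ]
      _ = ∑ᶠ j ∈ ⋃ q ∈ (↑phases : Set (ℤ × ℤ)), t q, F j := by rw [hcover]
      _ = ∑ᶠ q ∈ (↑phases : Set (ℤ × ℤ)), ∑ᶠ j ∈ t q, F j :=
          finsum_mem_biUnion hdisj phases.finite_toSet htfin
      _ = ∑ q ∈ phases, ∑ᶠ j ∈ t q, F j := finsum_mem_coe_finset _ _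
  · intro b hb hbne
    simp only [shift, up2]
    rw [if_neg]
    rw [mem_phases] at hb
    intro ⟨e1, e2⟩
    apply hbne
    rw [hpdef]
    simp only [Prod.sub_def] at e1 e2
    exact Prod.ext (by simp; omega) (by simp; omega)
  · intro hnp; exact absurd hpmem hnp
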